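/- Fix a real E-by-V matrix d, a diagonal V-by-V matrix ★₀ with positive diagonal, a diagonal E-by-E matrix ★₁, a vertex v ∈ V, and n = |V|. For t ∈ ℝ let ★₀(t) = ★₀ + t Eᵥᵥ. Suppose xⁱ(t) ∈ ℝ^V and λⁱ(t) ∈ ℝ (i = 1, …, n) are differentiable at 0, satisfy dᵀ★₁d xⁱ(t) = λⁱ(t) ★₀(t) xⁱ(t) and (xⁱ(t))ᵀ★₀(t)xⁱ(t) = 1 near 0, satisfy (xⁱ(0))ᵀ★₀xʲ(0) = δᵢⱼ, and the eigenvalues λ¹(0), …, λⁿ(0) are pairwise distinct. Then for each i, (xⁱ)'(0) = Σⱼ Nᵢⱼ · xʲᵥ(0) · xⁱᵥ(0) · xʲ(0), where Nᵢⱼ = λⁱ(0)/(λʲ(0) − λⁱ(0)) for j ≠ i and Nᵢᵢ = −1/2, and xʲᵥ(0) denotes component v of xʲ(0). -/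

import Mathlib

/-!
Differentiating `A xⁱ(t) = λⁱ(t) (S + t B) xⁱ(t)` at `0` gives
`A ẋⁱ = λ̇ⁱ S xⁱ + λⁱ (S ẋⁱ + B xⁱ)`, and differentiating the normalization gives
`2 ⟨xⁱ, S ẋⁱ⟩ + ⟨xⁱ, B xⁱ⟩ = 0`. Pairing the first identity with `xʲ` for `j ≠ i` and using the
symmetry of `A` and `S` gives `(λʲ − λⁱ) ⟨xʲ, S ẋⁱ⟩ = λⁱ ⟨xʲ, B xⁱ⟩`. Since the `xʲ` are
`S`-orthonormal and there are `n` of them, `ẋⁱ = Σⱼ ⟨xʲ, S ẋⁱ⟩ xʲ`; for `B = Eᵥᵥ` one has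
`⟨xʲ, B xⁱ⟩ = xʲᵥ xⁱᵥ`.
-/

open Matrix Filter Topology

namespace Matrix

variable {n : Type*}

theorem IsSymm.transpose_mul_mul {m α : Type*} [Fintype m] [CommSemiring α] {D : Matrix m m α}
    (hD : D.IsSymm) (d : Matrix m n α) : (dᵀ * D * d).IsSymm := by
  simp only [IsSymm, transpose_mul, transpose_transpose, hD.eq, Matrix.mul_assoc]

theorem IsSymm.dotProduct_mulVec_comm [Fintype n] {α : Type*} [CommSemiring α] {A : Matrix n n α}
    (hA : A.IsSymm) (v w : n → α) : v ⬝ᵥ (A *ᵥ w) = w ⬝ᵥ (A *ᵥ v) := by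
  rw [dotProduct_mulVec, ← mulVec_transpose, hA.eq, dotProduct_comm]

theorem dotProduct_single_mulVec [Fintype n] [DecidableEq n] {α : Type*} [CommSemiring α]
    (i j : n) (c : α) (v w : n → α) : v ⬝ᵥ (single i j c *ᵥ w) = c * v i * w j := by
  simp only [dotProduct, single_mulVec, Function.update_apply, Pi.zero_apply, mul_ite, mul_zero,
    Finset.sum_ite_eq', Finset.mem_univ, ↓reduceIte]
  ring

theorem eq_sum_dotProduct_mulVec_smul [Fintype n] [DecidableEq n] {R : Type*} [CommRing R]
    {S : Matrix n n R} {b : n → n → R}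
    (hb : ∀ i j, b i ⬝ᵥ (S *ᵥ b j) = if i = j then 1 else 0) (y : n → R) :
    y = ∑ j, (b j ⬝ᵥ (S *ᵥ y)) • b j := by
  have hXSX : of b * S * (of b)ᵀ = 1 := by
    ext i j
    rw [one_apply, ← hb i j, Matrix.mul_assoc]
    rfl
  have hinv : (of b)ᵀ * (of b * S) = 1 := mul_eq_one_comm.mp hXSX
  calc y = ((of b)ᵀ * (of b * S)) *ᵥ y := by rw [hinv, one_mulVec]
    _ = _ := by
      rw [← mulVec_mulVec, ← mulVec_mulVec, mulVec_transpose, vecMul_eq_sum]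
      rfl

end Matrix

section Derivatives

variable {n : Type*} [Fintype n] {x : ℝ → n → ℝ} {x' : n → ℝ} {t₀ : ℝ}

theorem HasDerivAt.dotProduct {y : ℝ → n → ℝ} {y' : n → ℝ} (hx : HasDerivAt x x' t₀)
    (hy : HasDerivAt y y' t₀) :
    HasDerivAt (fun t => x t ⬝ᵥ y t) (x' ⬝ᵥ y t₀ + x t₀ ⬝ᵥ y') t₀ := by
  have h := HasDerivAt.fun_sum fun w (_ : w ∈ Finset.univ) =>
    (hasDerivAt_pi.mp hx w).fun_mul (hasDerivAt_pi.mp hy w)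
  simpa only [_root_.dotProduct, Finset.sum_add_distrib] using h

theorem HasDerivAt.mulVec {m : Type*} [Fintype m] (M : Matrix m n ℝ) (hx : HasDerivAt x x' t₀) :
    HasDerivAt (fun t => M *ᵥ x t) (M *ᵥ x') t₀ :=
  (LinearMap.toContinuousLinearMap (Matrix.mulVecLin M)).hasFDerivAt.comp_hasDerivAt t₀ hx

theorem HasDerivAt.add_smul_mulVec (S B : Matrix n n ℝ) (hx : HasDerivAt x x' t₀) :
    HasDerivAt (fun t => (S + t • B) *ᵥ x t) ((S + t₀ • B) *ᵥ x' + B *ᵥ x t₀) t₀ := by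
  have h := (hx.mulVec S).fun_add ((hasDerivAt_id t₀).fun_smul (hx.mulVec B))
  simpa only [add_mulVec, smul_mulVec, id, one_smul, add_assoc] using h

theorem mulVec_eq_of_eventually_mulVec_eq_smul_add_smul_mulVec {A S B : Matrix n n ℝ}
    {lam : ℝ → ℝ} {lam' : ℝ} (hx : HasDerivAt x x' t₀) (hlam : HasDerivAt lam lam' t₀)
    (h : ∀ᶠ t in 𝓝 t₀, A *ᵥ x t = lam t • ((S + t • B) *ᵥ x t)) :
    A *ᵥ x' = lam t₀ • ((S + t₀ • B) *ᵥ x' + B *ᵥ x t₀) + lam' • ((S + t₀ • B) *ᵥ x t₀) :=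
  ((Filter.EventuallyEq.hasDerivAt_iff h).mp (hx.mulVec A)).unique
    (hlam.fun_smul (hx.add_smul_mulVec S B))

theorem dotProduct_add_eq_zero_of_eventually_dotProduct_eq {S B : Matrix n n ℝ} {c : ℝ}
    (hx : HasDerivAt x x' t₀) (h : ∀ᶠ t in 𝓝 t₀, x t ⬝ᵥ ((S + t • B) *ᵥ x t) = c) :
    x' ⬝ᵥ ((S + t₀ • B) *ᵥ x t₀) + x t₀ ⬝ᵥ ((S + t₀ • B) *ᵥ x' + B *ᵥ x t₀) = 0 :=
  ((Filter.EventuallyEq.hasDerivAt_iff h).mp (hx.dotProduct (hx.add_smul_mulVec S B))).unique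
    (hasDerivAt_const t₀ c)

end Derivatives

section Perturbation

variable {K n : Type*} [Field K] [Fintype n] {A S B : Matrix n n K}
  {b : n → n → K} {μ : n → K} {i : n} {y : n → K} {μ' : K}

theorem dotProduct_mulVec_eq_div_of_mulVec_eq [DecidableEq n] (hA : A.IsSymm) (hS : S.IsSymm)
    (heig : ∀ j, A *ᵥ b j = μ j • (S *ᵥ b j))
    (horth : ∀ i j, b i ⬝ᵥ (S *ᵥ b j) = if i = j then 1 else 0)
    (hy : A *ᵥ y = μ i • (S *ᵥ y + B *ᵥ b i) + μ' • (S *ᵥ b i)) {j : n} (hji : j ≠ i)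
    (hμ : μ j ≠ μ i) :
    b j ⬝ᵥ (S *ᵥ y) = μ i / (μ j - μ i) * (b j ⬝ᵥ (B *ᵥ b i)) := by
  have hpair : μ j * (b j ⬝ᵥ (S *ᵥ y)) = μ i * (b j ⬝ᵥ (S *ᵥ y) + b j ⬝ᵥ (B *ᵥ b i)) := by
    calc μ j * (b j ⬝ᵥ (S *ᵥ y)) = y ⬝ᵥ (A *ᵥ b j) := by
          rw [heig, dotProduct_smul, hS.dotProduct_mulVec_comm, smul_eq_mul]
      _ = b j ⬝ᵥ (A *ᵥ y) := hA.dotProduct_mulVec_comm _ _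
      _ = _ := by
          simp only [hy, dotProduct_add, dotProduct_smul, horth j i, if_neg hji, smul_eq_mul,
            mul_zero, add_zero]
  rw [div_mul_eq_mul_div, eq_div_iff (sub_ne_zero.mpr hμ)]
  linear_combination hpair

theorem dotProduct_mulVec_eq_neg_half_of_dotProduct_add_eq_zero [NeZero (2 : K)]
    (hS : S.IsSymm) (hnorm : y ⬝ᵥ (S *ᵥ b i) + b i ⬝ᵥ (S *ᵥ y + B *ᵥ b i) = 0) :
    b i ⬝ᵥ (S *ᵥ y) = -1 / 2 * (b i ⬝ᵥ (B *ᵥ b i)) := by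
  rw [hS.dotProduct_mulVec_comm y, dotProduct_add] at hnorm
  field_simp
  linear_combination hnorm

theorem eq_sum_of_perturbed_eigen [DecidableEq n] [NeZero (2 : K)] (hA : A.IsSymm)
    (hS : S.IsSymm) (heig : ∀ j, A *ᵥ b j = μ j • (S *ᵥ b j))
    (horth : ∀ i j, b i ⬝ᵥ (S *ᵥ b j) = if i = j then 1 else 0)
    (hdist : ∀ i j, i ≠ j → μ i ≠ μ j)
    (hy : A *ᵥ y = μ i • (S *ᵥ y + B *ᵥ b i) + μ' • (S *ᵥ b i))
    (hnorm : y ⬝ᵥ (S *ᵥ b i) + b i ⬝ᵥ (S *ᵥ y + B *ᵥ b i) = 0) :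
    y = ∑ j, ((if j = i then -1 / 2 else μ i / (μ j - μ i)) * (b j ⬝ᵥ (B *ᵥ b i))) • b j := by
  refine (eq_sum_dotProduct_mulVec_smul horth y).trans (Finset.sum_congr rfl fun j _ => ?_)
  split_ifs with hji
  · subst hji
    rw [dotProduct_mulVec_eq_neg_half_of_dotProduct_add_eq_zero hS hnorm]
  · rw [dotProduct_mulVec_eq_div_of_mulVec_eq hA hS heig horth hy hji (hdist j i hji)]

end Perturbation

theorem stmt_13_general {E V : Type*} [Fintype E] [Fintype V] [DecidableEq E] [DecidableEq V]
    (d : Matrix E V ℝ) (s0 : V → ℝ) (s1 : E → ℝ) (v : V)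
    (x : V → ℝ → V → ℝ) (lam : V → ℝ → ℝ)
    (x' : V → V → ℝ) (lam' : V → ℝ)
    (hx : ∀ i, HasDerivAt (x i) (x' i) 0)
    (hlam : ∀ i, HasDerivAt (lam i) (lam' i) 0)
    (heig : ∀ i, ∀ᶠ t in 𝓝 (0 : ℝ),
      (dᵀ * Matrix.diagonal s1 * d) *ᵥ x i t
        = lam i t • ((Matrix.diagonal s0 + t • Matrix.single v v 1) *ᵥ x i t))
    (hnorm : ∀ i, ∀ᶠ t in 𝓝 (0 : ℝ),
      x i t ⬝ᵥ ((Matrix.diagonal s0 + t • Matrix.single v v 1) *ᵥ x i t) = 1)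
    (horth : ∀ i j, x i 0 ⬝ᵥ (Matrix.diagonal s0 *ᵥ x j 0) = if i = j then 1 else 0)
    (hdist : ∀ i j, i ≠ j → lam i 0 ≠ lam j 0) :
    ∀ i, x' i = ∑ j,
      ((if j = i then (-(1 : ℝ) / 2) else lam i 0 / (lam j 0 - lam i 0))
        * x j 0 v * x i 0 v) • x j 0 := by
  intro i
  have heig0 : ∀ j, (dᵀ * diagonal s1 * d) *ᵥ x j 0 = lam j 0 • (diagonal s0 *ᵥ x j 0) :=
    fun j => by simpa only [zero_smul, add_zero] using (heig j).self_of_nhds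
  have hy := mulVec_eq_of_eventually_mulVec_eq_smul_add_smul_mulVec (hx i) (hlam i) (heig i)
  have hn := dotProduct_add_eq_zero_of_eventually_dotProduct_eq (hx i) (hnorm i)
  simp only [zero_smul, add_zero] at hy hn
  have h := eq_sum_of_perturbed_eigen ((isSymm_diagonal s1).transpose_mul_mul d)
    (isSymm_diagonal s0) heig0 horth hdist hy hn
  simpa only [dotProduct_single_mulVec, one_mul, mul_assoc] using h

/-- Derivative of a `★₀`-orthonormalized generalized eigenvector of the pencil
`(dᵀ★₁d, ★₀(t))` under perturbation `★₀(t) = ★₀ + t Eᵥᵥ`, with pairwise distinct eigenvalues: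
`(xⁱ)'(0) = Σⱼ Nᵢⱼ xʲᵥ xⁱᵥ xʲ`, where `Nᵢⱼ = λⁱ/(λʲ − λⁱ)` for `j ≠ i` and `Nᵢᵢ = −1/2`. -/
theorem stmt_13 {E V : Type*} [Fintype E] [Fintype V] [DecidableEq E] [DecidableEq V]
    (d : Matrix E V ℝ) (s0 : V → ℝ) (hs0 : ∀ v, 0 < s0 v) (s1 : E → ℝ) (v : V)
    (x : V → ℝ → V → ℝ) (lam : V → ℝ → ℝ)
    (x' : V → V → ℝ) (lam' : V → ℝ)
    (hx : ∀ i, HasDerivAt (x i) (x' i) 0)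
    (hlam : ∀ i, HasDerivAt (lam i) (lam' i) 0)
    (heig : ∀ i, ∀ᶠ t in 𝓝 (0 : ℝ),
      (dᵀ * Matrix.diagonal s1 * d) *ᵥ x i t
        = lam i t • ((Matrix.diagonal s0 + t • Matrix.single v v 1) *ᵥ x i t))
    (hnorm : ∀ i, ∀ᶠ t in 𝓝 (0 : ℝ),
      x i t ⬝ᵥ ((Matrix.diagonal s0 + t • Matrix.single v v 1) *ᵥ x i t) = 1)
    (horth : ∀ i j, x i 0 ⬝ᵥ (Matrix.diagonal s0 *ᵥ x j 0) = if i = j then 1 else 0)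
    (hdist : ∀ i j, i ≠ j → lam i 0 ≠ lam j 0) :
    ∀ i, x' i = ∑ j,
      ((if j = i then (-(1 : ℝ) / 2) else lam i 0 / (lam j 0 - lam i 0))
        * x j 0 v * x i 0 v) • x j 0 :=
  stmt_13_general d s0 s1 v x lam x' lam' hx hlam heig hnorm horth hdist
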